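/- Let R = ℤ[q] be the polynomial ring in one variable q, and let L = R[x,x⁻¹] be the Laurent polynomial ring over R. For m ∈ ℕ set χ_m = Σ_{k=0}^{m} x^{m−2k} ∈ L, and let H : L → L be the R-linear map defined on the basis {x^m : m ∈ ℤ} by H(x^m) = χ_m for m ≥ 0, H(x^{−1}) = 0, and H(x^m) = −χ_{−m−2} for m ≤ −2. Then for every n ∈ ℕ and every g ∈ L satisfying (x² − 1)·g = (x^n − x^{2−n}) + q·(x^{2−n} − x^{n+2}), one has H(x^{−1}·g) = q·H(x^{−n−1}). -/

import Mathlib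

open LaurentPolynomial Polynomial

/-- The character of the irreducible `SL₂`-representation of highest weight `m`, as a Laurent
polynomial in `x` with coefficients in `ℤ[q]`. -/
noncomputable def sl2CharQ (m : ℕ) : LaurentPolynomial (Polynomial ℤ) :=
  ∑ k ∈ Finset.range (m + 1), T ((m : ℤ) - 2 * k)

/-!
Borel–Weil–Bott makes `H` antisymmetric under the dot action `k ↦ -k - 2` of the Weyl group, with
`H(x⁻¹) = 0`, so `H` kills every string `x^{-m} + x^{-m+2} + ⋯ + x^{m-2}`. Dividing by `x² - 1`
telescopes: for `n = m + 1`, `x⁻¹·g` is such a string minus `q` times the string prolonged by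
`x^m`, whence `H(x⁻¹·g) = -q·H(x^m) = q·H(x^{-m-2})`. For `n = 0`, `x⁻¹·g = -x⁻¹`.
-/

namespace LaurentPolynomial

section Ring

variable {R : Type*} [Ring R]

theorem T_sub_one_ne_zero [Nontrivial R] {d : ℤ} (hd : d ≠ 0) : (T d - 1 : R[T;T⁻¹]) ≠ 0 := by
  rw [sub_ne_zero, ← T_zero]
  exact fun h => hd (AddMonoidAlgebra.single_left_injective (one_ne_zero (α := R)) h)

theorem T_sub_one_mul_sum_T (a d : ℤ) (M : ℕ) :
    (T d - 1 : R[T;T⁻¹]) * ∑ k ∈ Finset.range M, T (a + d * k) = T (a + d * M) - T a := by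
  induction M with
  | zero => simp
  | succ M ih =>
    rw [Finset.sum_range_succ, mul_add, ih, sub_mul, one_mul, ← T_add,
      show d + (a + d * M) = a + d * ↑(M + 1) by push_cast; ring]
    abel

end Ring

theorem T_neg_one_mul_eq_of_T_two_sub_one_mul_eq {R : Type*} [CommRing R] [IsDomain R] (q : R)
    (m : ℕ) {g : R[T;T⁻¹]}
    (hg : (T 2 - 1) * g = (T ((m + 1 : ℕ) : ℤ) - T (2 - ((m + 1 : ℕ) : ℤ))) +
      C q * (T (2 - ((m + 1 : ℕ) : ℤ)) - T (((m + 1 : ℕ) : ℤ) + 2))) :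
    T (-1) * g = ∑ k ∈ Finset.range m, T (-m + 2 * k) -
      C q * ∑ k ∈ Finset.range (m + 1), T (-m + 2 * k) := by
  refine mul_left_cancel₀ (T_sub_one_ne_zero two_ne_zero) ?_
  rw [mul_left_comm, hg, mul_sub (T 2 - 1), mul_left_comm (T 2 - 1) (C q), T_sub_one_mul_sum_T,
    T_sub_one_mul_sum_T]
  simp only [mul_add, mul_sub, mul_left_comm (T (-1)), ← T_add]
  push_cast
  ring_nf

end LaurentPolynomial

theorem sum_range_apply_neg_add_two_mul_eq_zero {M : Type*} [AddCommGroup M] (f : ℤ → M)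
    (hf : ∀ m : ℕ, f (-m - 2) = -f m) (hf₁ : f (-1) = 0) (m : ℕ) :
    ∑ k ∈ Finset.range m, f (-m + 2 * k) = 0 := by
  induction m using Nat.twoStepInduction with
  | zero => simp
  | one => simpa using hf₁
  | more m ih _ =>
    have hmid (k : ℕ) : f (-↑(m + 2) + 2 * ↑(k + 1)) = f (-m + 2 * k) := by
      congr 1; push_cast; ring
    rw [Finset.sum_range_succ, Finset.sum_range_succ', Finset.sum_congr rfl fun k _ => hmid k, ih,
      show -↑(m + 2) + 2 * ((0 : ℕ) : ℤ) = -m - 2 by push_cast; ring,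
      show -↑(m + 2) + 2 * ((m + 1 : ℕ) : ℤ) = m by push_cast; ring, hf]
    abel

/-- Rank-one case of Lemma 2.4(b): for the Euler-characteristic map `H` (Borel–Weil–Bott for
`ℙ¹`) and `g` the value of the Demazure–Lusztig operator `Φ(T_s)⋆O(-n)`, one has
`H(x⁻¹·g) = q·H(x^{-n-1})`. -/
theorem demazure_lusztig_euler_characteristic_sl2
    (H : LaurentPolynomial (Polynomial ℤ) →ₗ[Polynomial ℤ] LaurentPolynomial (Polynomial ℤ))
    (hpos : ∀ m : ℕ, H (T (m : ℤ)) = sl2CharQ m)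
    (hneg1 : H (T (-1)) = 0)
    (hneg : ∀ m : ℕ, H (T (-(m : ℤ) - 2)) = - sl2CharQ m)
    (n : ℕ) (g : LaurentPolynomial (Polynomial ℤ))
    (hg : (T 2 - 1) * g =
        (T (n : ℤ) - T (2 - (n : ℤ))) +
          LaurentPolynomial.C Polynomial.X * (T (2 - (n : ℤ)) - T ((n : ℤ) + 2))) :
    H (T (-1) * g) = LaurentPolynomial.C Polynomial.X * H (T (-(n : ℤ) - 1)) := by
  have hdot (m : ℕ) : H (T (-m - 2)) = -H (T m) := by rw [hpos, hneg]
  have hstring := sum_range_apply_neg_add_two_mul_eq_zero (fun k => H (T k)) hdot hneg1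
  rcases n with _ | m
  · have hg₀ : g = -1 := mul_left_cancel₀ (T_sub_one_ne_zero two_ne_zero) <| by
      rw [hg]
      simp only [CharP.cast_eq_zero, T_zero, sub_zero, zero_add, sub_self, mul_zero, add_zero]
      ring
    rw [show T (-1) * g = -T (-1) by rw [hg₀]; ring, map_neg, hneg1, neg_zero]
    simp [hneg1]
  · rw [T_neg_one_mul_eq_of_T_two_sub_one_mul_eq _ m hg, ← LaurentPolynomial.smul_eq_C_mul,
      map_sub, map_smul, map_sum, map_sum, Finset.sum_range_succ, hstring, zero_add, zero_sub,
      show -(m : ℤ) + 2 * m = m by ring, show -((m + 1 : ℕ) : ℤ) - 1 = -m - 2 by push_cast; ring,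
      hdot, LaurentPolynomial.smul_eq_C_mul]
    ring
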